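/- arXiv:2101.10748 — 2 statements merged into one kernel-verified Lean document; each statement's English description precedes it below -/
import Mathlib

section
/- Entrywise lower bound on the right Perron eigenvector: under (HP1)–(HP3), for every ε > 0 there exists N such that for all n ≥ N and all y ∈ X_n ∖ {x_n}, γ_n(y) ≥ 1 − ε − E_y[ζ_{T_n}(x_n)], where E_y[ζ_T(x)] := Σ_{s=0}^{T−1} P_n^s(y,x) is the expected time spent at x within time T by the chain started at y. -/
open Finset Filter

/-- The kernel of the chain killed at `x`: all entries from or to `x` are set to zero.
For `y, z ≠ x` the powers of `killed P x` agree with the powers of the principal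
submatrix `[P]_x` of `P` obtained by deleting the row and the column indexed by `x`. -/
def killed {n : ℕ} (P : Matrix (Fin n) (Fin n) ℝ) (x : Fin n) :
    Matrix (Fin n) (Fin n) ℝ :=
  Matrix.of fun y z => if y = x ∨ z = x then 0 else P y z

/-- The no-hit probability `ℙ_α(τ_x > t) = Σ_{y ≠ x} Σ_{z ≠ x} α(y)·([P]_x)^t(y,z)`. -/
def noHit {n : ℕ} (P : Matrix (Fin n) (Fin n) ℝ) (x : Fin n)
    (a : Fin n → ℝ) (t : ℕ) : ℝ :=
  ∑ y ∈ Finset.univ.erase x, ∑ z ∈ Finset.univ.erase x, a y * ((killed P x) ^ t) y z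

/-- The expected number of returns to `x` within time `T`:
`R_T(x) = Σ_{t=0}^{T} P^t(x,x)`. -/
def returns {n : ℕ} (P : Matrix (Fin n) (Fin n) ℝ) (x : Fin n) (T : ℕ) : ℝ :=
  ∑ t ∈ Finset.range (T + 1), (P ^ t) x x


/-!
Fix `η` so that every row of `P^T` is `η`-close to `π` in `ℓ¹` and `T π(x) ≤ η²`; write
`K = [P]_x`, `L = λ^T`, `M = max γ`, `G = π ⬝ᵥ γ` and `E_a = E_a[ζ_T(x)]`. Mixing puts `P^T γ`
within `η M` of `G`, and `0 ≤ (P^T - K^T) γ ≤ M ℙ_a(τ_x ≤ T) ≤ M (E_a + P^T(a,x))`. Reading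
`K^T γ = L γ` at `y`, at a maximiser of `γ`, and averaged against `μ` (for which
`μ K^T γ = μ K^T 1 = L`) yields `γ(y) ≥ G - η M - M (E_y + 2η)`, `L M ≤ G + η M` and
`G - η M - M (1 - L) ≤ L ≤ G + η M`, which force `M, G = 1 + O(η)` as soon as `L ≥ 1 - 5η`.
That last bound is Collatz–Wielandt for `μ`: by stationarity `Σ_a π(a) E_a = T π(x) ≤ η²`, so by
Markov's inequality all but `O(η)` of `π` lies on `A = {a ≠ x : E_a ≤ η}`, and from each `a ∈ A`
the killed chain is still in `A` at time `T` with probability at least `1 - 5η`; irreducibility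
of `K` makes `μ(A) > 0`.
-/

open Matrix

section MatrixPowers

variable {ι : Type*} [Fintype ι]

theorem Matrix.pow_apply_le_pow_apply [DecidableEq ι] {A B : Matrix ι ι ℝ}
    (hA : ∀ i j, 0 ≤ A i j) (hAB : ∀ i j, A i j ≤ B i j) (t : ℕ) (i j : ι) :
    (A ^ t) i j ≤ (B ^ t) i j := by
  induction t generalizing j with
  | zero => exact le_rfl
  | succ t ih =>
    rw [pow_succ, pow_succ, mul_apply, mul_apply]
    exact sum_le_sum fun k _ =>
      mul_le_mul (ih k) (hAB k j) (hA k j) ((pow_apply_nonneg hA t i k).trans (ih k))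

theorem Matrix.vecMul_pow_eq_smul [DecidableEq ι] {A : Matrix ι ι ℝ} {v : ι → ℝ} {c : ℝ}
    (h : v ᵥ* A = c • v) (t : ℕ) : v ᵥ* A ^ t = c ^ t • v := by
  induction t with
  | zero => simp
  | succ t ih => rw [pow_succ, ← vecMul_vecMul, ih, smul_vecMul, h, smul_smul, pow_succ]

theorem Matrix.pow_mulVec_eq_smul [DecidableEq ι] {A : Matrix ι ι ℝ} {v : ι → ℝ} {c : ℝ}
    (h : A *ᵥ v = c • v) (t : ℕ) : A ^ t *ᵥ v = c ^ t • v := by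
  induction t with
  | zero => simp
  | succ t ih => rw [pow_succ', ← mulVec_mulVec, ih, mulVec_smul, h, smul_smul, pow_succ]

theorem Matrix.dotProduct_pow_mulVec_of_vecMul_eq_smul [DecidableEq ι] {A : Matrix ι ι ℝ}
    {v : ι → ℝ} {c : ℝ} (h : v ᵥ* A = c • v) (t : ℕ) (w : ι → ℝ) :
    v ⬝ᵥ (A ^ t *ᵥ w) = c ^ t * (v ⬝ᵥ w) := by
  rw [dotProduct_mulVec, vecMul_pow_eq_smul h, smul_dotProduct, smul_eq_mul]

theorem Matrix.sum_mul_sum_pow_apply_of_vecMul_eq [DecidableEq ι] {A : Matrix ι ι ℝ}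
    {π : ι → ℝ} (hπ : π ᵥ* A = π) (T : ℕ) (x : ι) :
    ∑ a, π a * ∑ s ∈ range T, (A ^ s) a x = T * π x := by
  have hπ' : π ᵥ* A = (1 : ℝ) • π := by rw [one_smul, hπ]
  have h : ∀ s, ∑ a, π a * (A ^ s) a x = π x := fun s => by
    simpa [vecMul, dotProduct] using congrFun (vecMul_pow_eq_smul hπ' s) x
  simp_rw [mul_sum]
  rw [sum_comm]
  simp [h]

theorem Matrix.pos_of_vecMul_eq_smul [DecidableEq ι] {A : Matrix ι ι ℝ}
    (hA : ∀ i j, 0 ≤ A i j) {μ : ι → ℝ} (hμ : 0 ≤ μ) {c : ℝ} (hc : 0 ≤ c)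
    (hμA : μ ᵥ* A = c • μ) {i j : ι} {t : ℕ} (hi : 0 < μ i) (hij : 0 < (A ^ t) i j) :
    0 < μ j := by
  have h : μ i * (A ^ t) i j ≤ (μ ᵥ* A ^ t) j :=
    single_le_sum (f := fun k => μ k * (A ^ t) k j)
      (fun k _ => mul_nonneg (hμ k) (pow_apply_nonneg hA t k j)) (mem_univ i)
  rw [vecMul_pow_eq_smul hμA, Pi.smul_apply, smul_eq_mul] at h
  exact pos_of_mul_pos_right ((mul_pos hi hij).trans_le h) (pow_nonneg hc t)

/-- Collatz–Wielandt bound for a nonnegative left eigenvector. -/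
theorem Matrix.le_of_vecMul_eq_smul {A : Matrix ι ι ℝ} (hA : ∀ i j, 0 ≤ A i j) {μ : ι → ℝ}
    (hμ : 0 ≤ μ) {c q : ℝ} (hμA : μ ᵥ* A = c • μ) {s : Finset ι}
    (hs : 0 < ∑ i ∈ s, μ i) (hq : ∀ i ∈ s, q ≤ ∑ j ∈ s, A i j) : q ≤ c := by
  refine le_of_mul_le_mul_right ?_ hs
  calc q * ∑ i ∈ s, μ i ≤ ∑ i ∈ s, μ i * ∑ j ∈ s, A i j := by
        rw [mul_sum]
        exact sum_le_sum fun i hi => by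
          rw [mul_comm]
          exact mul_le_mul_of_nonneg_left (hq i hi) (hμ i)
    _ ≤ ∑ i, μ i * ∑ j ∈ s, A i j :=
        sum_le_sum_of_subset_of_nonneg (subset_univ _) fun i _ _ =>
          mul_nonneg (hμ i) (sum_nonneg fun j _ => hA i j)
    _ = ∑ j ∈ s, (μ ᵥ* A) j := by
        simp only [vecMul, dotProduct, mul_sum]
        rw [sum_comm]
    _ = c * ∑ i ∈ s, μ i := by simp [hμA, mul_sum]

end MatrixPowers

theorem Finset.mul_sum_filter_lt_le {ι : Type*} {s : Finset ι} {w f : ι → ℝ}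
    (hw : ∀ i ∈ s, 0 ≤ w i) (hf : ∀ i ∈ s, 0 ≤ f i) (η : ℝ) :
    η * ∑ i ∈ s with η < f i, w i ≤ ∑ i ∈ s, w i * f i := by
  rw [mul_sum]
  calc ∑ i ∈ s with η < f i, η * w i ≤ ∑ i ∈ s with η < f i, w i * f i :=
        sum_le_sum fun i hi => by
          rw [mem_filter] at hi
          rw [mul_comm]
          exact mul_le_mul_of_nonneg_left hi.2.le (hw i hi.1)
    _ ≤ ∑ i ∈ s, w i * f i :=
        sum_le_sum_of_subset_of_nonneg (filter_subset _ _) fun i hi _ =>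
          mul_nonneg (hw i hi) (hf i hi)

section DotProduct

variable {ι : Type*} [Fintype ι]

theorem le_add_of_sum_abs_sub_le {p q : ι → ℝ} {η : ℝ} (h : ∑ i, |p i - q i| ≤ η) (j : ι) :
    p j ≤ q j + η := by
  have hj := (le_abs_self _).trans
    (single_le_sum (f := fun i => |p i - q i|) (fun i _ => abs_nonneg _) (mem_univ j))
  linarith

theorem sum_sub_le_sum_of_sum_abs_sub_le {p q : ι → ℝ} {η : ℝ} (h : ∑ i, |p i - q i| ≤ η)
    (s : Finset ι) : ∑ i ∈ s, q i - η ≤ ∑ i ∈ s, p i := by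
  have hs : ∑ i ∈ s, (q i - p i) ≤ ∑ i, |p i - q i| :=
    (sum_le_sum fun i _ => (neg_sub _ _).symm.le.trans (neg_le_abs _)).trans
      (sum_le_sum_of_subset_of_nonneg (subset_univ _) fun i _ _ => abs_nonneg _)
  rw [sum_sub_distrib] at hs
  linarith

theorem abs_dotProduct_sub_dotProduct_le {p q g : ι → ℝ} {M : ℝ} (hg : 0 ≤ g)
    (hgM : ∀ i, g i ≤ M) : |p ⬝ᵥ g - q ⬝ᵥ g| ≤ (∑ i, |p i - q i|) * M := by
  rw [← sub_dotProduct, dotProduct, sum_mul]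
  refine (abs_sum_le_sum_abs _ _).trans (sum_le_sum fun i _ => ?_)
  rw [abs_mul, abs_of_nonneg (hg i)]
  exact mul_le_mul_of_nonneg_left (hgM i) (abs_nonneg _)

theorem dotProduct_sub_dotProduct_le {p k g : ι → ℝ} {M : ℝ} (hkp : k ≤ p)
    (hp : ∑ i, p i = 1) (hgM : ∀ i, g i ≤ M) :
    p ⬝ᵥ g - k ⬝ᵥ g ≤ M * (1 - ∑ i, k i) := by
  rw [← sub_dotProduct, dotProduct, ← hp, ← sum_sub_distrib, mul_sum]
  exact sum_le_sum fun i _ => by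
    rw [mul_comm M]
    exact mul_le_mul_of_nonneg_left (hgM i) (sub_nonneg.2 (hkp i))

variable {μ f : ι → ℝ}

theorem dotProduct_le_of_forall_le (hμ0 : 0 ≤ μ) (hμ1 : ∑ i, μ i = 1) {c : ℝ}
    (h : ∀ i, f i ≤ c) : μ ⬝ᵥ f ≤ c := by
  calc μ ⬝ᵥ f ≤ ∑ i, μ i * c := sum_le_sum fun i _ => mul_le_mul_of_nonneg_left (h i) (hμ0 i)
    _ = c := by rw [← sum_mul, hμ1, one_mul]

theorem add_mul_dotProduct_le_of_forall_le (hμ0 : 0 ≤ μ) (hμ1 : ∑ i, μ i = 1) {v : ι → ℝ}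
    {c d : ℝ} (h : ∀ i, c + d * v i ≤ f i) : c + d * (μ ⬝ᵥ v) ≤ μ ⬝ᵥ f := by
  calc c + d * (μ ⬝ᵥ v) = ∑ i, μ i * (c + d * v i) := by
        simp only [dotProduct, mul_add, sum_add_distrib, ← sum_mul, hμ1, mul_sum]
        ring_nf
    _ ≤ μ ⬝ᵥ f := sum_le_sum fun i _ => mul_le_mul_of_nonneg_left (h i) (hμ0 i)

end DotProduct

theorem sum_abs_le_of_rpow_mul_abs_lt {n : ℕ} {v : Fin n → ℝ} {c η : ℝ} (hc : 1 ≤ c)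
    (hn : 0 < n) (h : ∀ b, (n : ℝ) ^ c * |v b| < η) : ∑ b, |v b| ≤ η := by
  have hn' : (0 : ℝ) < n := Nat.cast_pos.2 hn
  have hb : ∀ b ∈ univ, |v b| ≤ η / n := fun b _ => by
    have hnc : (n : ℝ) ≤ (n : ℝ) ^ c := by
      simpa using Real.rpow_le_rpow_of_exponent_le (Nat.one_le_cast.2 hn) hc
    rw [le_div_iff₀ hn', mul_comm]
    nlinarith [h b, abs_nonneg (v b)]
  calc ∑ b, |v b| ≤ univ.card • (η / n) := sum_le_card_nsmul _ _ _ hb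
    _ = η := by rw [card_univ, Fintype.card_fin, nsmul_eq_mul, mul_div_cancel₀ _ hn'.ne']

theorem one_sub_sub_le_of_bounds {η L M G E g : ℝ} (hη0 : 0 ≤ η) (hη : η ≤ 1 / 20)
    (hL : 1 - 5 * η ≤ L) (hL1 : L ≤ 1) (hM : 0 ≤ M) (hLM : L * M ≤ G + η * M)
    (hGup : G - η * M - M * (1 - L) ≤ L) (hGlow : L ≤ G + η * M) (hE : 0 ≤ E) (hg0 : 0 ≤ g)
    (hg : G - η * M - M * (E + 2 * η) ≤ g) : 1 - 50 * η - E ≤ g := by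
  have hM1 : M * (1 - 12 * η) ≤ 1 := by nlinarith
  have hM30 : M ≤ 1 + 30 * η := by nlinarith
  rcases le_or_gt E 1 with hE1 | hE1
  · nlinarith [mul_le_mul_of_nonneg_right hM30 hE, mul_le_mul_of_nonneg_left hE1 hη0]
  · linarith

section KilledChain

variable {n : ℕ} {P : Matrix (Fin n) (Fin n) ℝ} {x : Fin n} {pi mu g gamma : Fin n → ℝ}
  {lam η M : ℝ} {T : ℕ}

theorem killed_apply_nonneg (hP : ∀ i j, 0 ≤ P i j) (i j : Fin n) : 0 ≤ killed P x i j := by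
  simp only [killed, of_apply]
  split_ifs <;> simp [hP]

theorem killed_apply_le (hP : ∀ i j, 0 ≤ P i j) (i j : Fin n) : killed P x i j ≤ P i j := by
  simp only [killed, of_apply]
  split_ifs <;> simp [hP]

theorem killed_pow_apply_le (hP : ∀ i j, 0 ≤ P i j) (t : ℕ) (i j : Fin n) :
    (killed P x ^ t) i j ≤ (P ^ t) i j :=
  pow_apply_le_pow_apply (killed_apply_nonneg hP) (killed_apply_le hP) t i j

theorem sum_killed_apply (hP : ∀ i, ∑ j, P i j = 1) {a : Fin n} (ha : a ≠ x) :
    ∑ b, killed P x a b = 1 - P a x := by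
  have h : ∀ b ∈ univ.erase x, killed P x a b = P a b := fun b hb => by
    simp [killed, ha, ne_of_mem_erase hb]
  rw [← sum_erase_add _ _ (mem_univ x), sum_congr rfl h, ← hP a,
    ← sum_erase_add _ _ (mem_univ x)]
  simp [killed]

/-- The chain started at `a ≠ x` can only be killed by a visit to `x` at one of the times
`1, …, t`. -/
theorem one_sub_sum_killed_pow_apply_le (hP : P ∈ rowStochastic ℝ (Fin n)) (t : ℕ)
    {a : Fin n} (ha : a ≠ x) :
    1 - ∑ b, (killed P x ^ t) a b ≤ ∑ s ∈ range t, (P ^ (s + 1)) a x := by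
  have hP0 : ∀ i j, 0 ≤ P i j := fun i j => nonneg_of_mem_rowStochastic hP
  induction t generalizing a with
  | zero => simp [one_apply]
  | succ t ih =>
    set S : Fin n → ℝ := fun w => ∑ s ∈ range t, (P ^ (s + 1)) w x
    have hstep : ∀ w, killed P x a w * (1 - ∑ b, (killed P x ^ t) w b) ≤ P a w * S w := by
      intro w
      by_cases hw : w = x
      · subst hw
        simp only [killed, of_apply, or_true, if_true, zero_mul]
        exact mul_nonneg (hP0 a w) (sum_nonneg fun s _ => pow_apply_nonneg hP0 _ _ _)
      · have hk : killed P x a w = P a w := by simp [killed, ha, hw]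
        rw [hk]
        exact mul_le_mul_of_nonneg_left (ih hw) (hP0 a w)
    calc 1 - ∑ b, (killed P x ^ (t + 1)) a b
        = (1 - ∑ w, killed P x a w)
            + ∑ w, killed P x a w * (1 - ∑ b, (killed P x ^ t) w b) := by
          simp only [pow_succ', mul_apply, mul_sub, mul_one, sum_sub_distrib, mul_sum]
          rw [sum_comm (f := fun b w => killed P x a w * (killed P x ^ t) w b)]
          ring
      _ ≤ P a x + ∑ w, P a w * S w := by
          rw [sum_killed_apply (fun i => sum_row_of_mem_rowStochastic hP i) ha]
          linarith [sum_le_sum fun w (_ : w ∈ univ) => hstep w]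
      _ = ∑ s ∈ range (t + 1), (P ^ (s + 1)) a x := by
          simp only [S, sum_range_succ', mul_sum, zero_add, pow_one]
          rw [sum_comm]
          simp only [pow_succ' P (_ + 1), mul_apply]
          ring

theorem sum_pow_apply_sub_visits_le_sum_killed_pow_apply (hP : P ∈ rowStochastic ℝ (Fin n))
    (t : ℕ) {a : Fin n} (ha : a ≠ x) (s : Finset (Fin n)) :
    ∑ b ∈ s, (P ^ t) a b - ∑ u ∈ range t, (P ^ u) a x - (P ^ t) a x
      ≤ ∑ b ∈ s, (killed P x ^ t) a b := by
  have hP0 : ∀ i j, 0 ≤ P i j := fun i j => nonneg_of_mem_rowStochastic hP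
  have hvisits :
      ∑ u ∈ range t, (P ^ (u + 1)) a x = ∑ u ∈ range t, (P ^ u) a x + (P ^ t) a x := by
    have h := sum_range_succ' (fun u => (P ^ u) a x) t
    rw [sum_range_succ, pow_zero, one_apply_ne ha, add_zero] at h
    exact h.symm
  have hdefect : ∑ b ∈ s, ((P ^ t) a b - (killed P x ^ t) a b)
      ≤ ∑ b, ((P ^ t) a b - (killed P x ^ t) a b) :=
    sum_le_sum_of_subset_of_nonneg (subset_univ s) fun b _ _ =>
      sub_nonneg.2 (killed_pow_apply_le hP0 t a b)
  rw [sum_sub_distrib, sum_sub_distrib, sum_row_of_mem_rowStochastic (pow_mem hP t)] at hdefect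
  linarith [one_sub_sum_killed_pow_apply_le hP t ha]

theorem pow_mulVec_apply_sub_killed_pow_mulVec_apply_le (hP : P ∈ rowStochastic ℝ (Fin n))
    (t : ℕ) (a : Fin n) (hgM : ∀ i, g i ≤ M) :
    (P ^ t *ᵥ g) a - (killed P x ^ t *ᵥ g) a ≤ M * (1 - (killed P x ^ t *ᵥ 1) a) := by
  have hP0 : ∀ i j, 0 ≤ P i j := fun i j => nonneg_of_mem_rowStochastic hP
  rw [mulVec, mulVec, mulVec, dotProduct_one]
  exact dotProduct_sub_dotProduct_le (fun b => killed_pow_apply_le hP0 t a b)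
    (sum_row_of_mem_rowStochastic (pow_mem hP t) a) hgM

theorem sub_mul_visits_le_killed_pow_mulVec_apply (hP : P ∈ rowStochastic ℝ (Fin n)) (t : ℕ)
    {a : Fin n} (ha : a ≠ x) (hM : 0 ≤ M) (hgM : ∀ i, g i ≤ M) :
    (P ^ t *ᵥ g) a - M * (∑ u ∈ range t, (P ^ u) a x + (P ^ t) a x)
      ≤ (killed P x ^ t *ᵥ g) a := by
  have hescape := sum_pow_apply_sub_visits_le_sum_killed_pow_apply hP t ha univ
  rw [sum_row_of_mem_rowStochastic (pow_mem hP t)] at hescape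
  have h1 : (killed P x ^ t *ᵥ 1) a = ∑ b, (killed P x ^ t) a b := dotProduct_one _
  have := mul_le_mul_of_nonneg_left (show 1 - (killed P x ^ t *ᵥ 1) a
    ≤ ∑ u ∈ range t, (P ^ u) a x + (P ^ t) a x by linarith) hM
  linarith [pow_mulVec_apply_sub_killed_pow_mulVec_apply_le (x := x) hP t a hgM]

theorem one_sub_sub_div_le_sum_filter_visits_le (hP : ∀ i j, 0 ≤ P i j) (hpi0 : 0 ≤ pi)
    (hpi1 : ∑ a, pi a = 1) (hpiP : pi ᵥ* P = pi) (hη : 0 < η) :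
    1 - pi x - T * pi x / η
      ≤ ∑ a ∈ univ.erase x with ∑ u ∈ range T, (P ^ u) a x ≤ η, pi a := by
  set E : Fin n → ℝ := fun a => ∑ u ∈ range T, (P ^ u) a x
  have hE : ∀ a, 0 ≤ E a := fun a => sum_nonneg fun u _ => pow_apply_nonneg hP u a x
  have hsplit := sum_filter_add_sum_filter_not (univ.erase x) (fun a => E a ≤ η) pi
  simp only [not_le] at hsplit
  rw [sum_erase_eq_sub (mem_univ x), hpi1] at hsplit
  have hmarkov := mul_sum_filter_lt_le (s := univ.erase x) (fun a _ => hpi0 a) (fun a _ => hE a) η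
  have hall : ∑ a ∈ univ.erase x, pi a * E a ≤ T * pi x := by
    rw [← sum_mul_sum_pow_apply_of_vecMul_eq hpiP T x]
    exact sum_le_sum_of_subset_of_nonneg (subset_univ _) fun a _ _ =>
      mul_nonneg (hpi0 a) (hE a)
  have hbad : ∑ a ∈ univ.erase x with η < E a, pi a ≤ T * pi x / η := by
    rw [le_div_iff₀ hη, mul_comm]
    exact hmarkov.trans hall
  linarith

theorem pos_of_vecMul_killed_eq_smul (hP0 : ∀ i j, 0 ≤ P i j)
    (hirr : ∀ a b, a ≠ x → b ≠ x → ∃ t : ℕ, 0 < (killed P x ^ t) a b) (hmu0 : 0 ≤ mu)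
    (hmu1 : ∑ a, mu a = 1) (hmux : mu x = 0) (hlam : 0 ≤ lam)
    (hmuK : mu ᵥ* killed P x = lam • mu) {b : Fin n} (hb : b ≠ x) : 0 < mu b := by
  obtain ⟨a, ha, hpos⟩ := exists_lt_of_sum_lt (s := univ.erase x) (f := 0) (g := mu) (by
    rw [sum_erase_eq_sub (f := mu) (mem_univ x), hmu1, hmux]
    simp)
  obtain ⟨t, ht⟩ := hirr a b (ne_of_mem_erase ha) hb
  exact pos_of_vecMul_eq_smul (killed_apply_nonneg hP0) hmu0 hlam hmuK hpos ht

theorem one_sub_five_mul_le_pow_of_mixing (hP : P ∈ rowStochastic ℝ (Fin n)) (hpi0 : 0 ≤ pi)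
    (hpi1 : ∑ a, pi a = 1) (hpiP : pi ᵥ* P = pi) (hmix : ∀ a, ∑ b, |(P ^ T) a b - pi b| ≤ η)
    (hT : 1 ≤ T) (hTpi : T * pi x ≤ η ^ 2) (hmu0 : 0 ≤ mu)
    (hmuK : mu ᵥ* killed P x = lam • mu) (hmupos : ∀ a, a ≠ x → 0 < mu a) (hη0 : 0 < η)
    (hη : η ≤ 1 / 2) :
    1 - 5 * η ≤ lam ^ T := by
  have hP0 : ∀ i j, 0 ≤ P i j := fun i j => nonneg_of_mem_rowStochastic hP
  set A := {a ∈ univ.erase x | ∑ u ∈ range T, (P ^ u) a x ≤ η}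
  have hpix : pi x ≤ η ^ 2 :=
    (le_mul_of_one_le_left (hpi0 x) (Nat.one_le_cast.2 hT)).trans hTpi
  have hpiA : 1 - η ^ 2 - η ≤ ∑ a ∈ A, pi a := by
    have h := one_sub_sub_div_le_sum_filter_visits_le hP0 hpi0 hpi1 hpiP hη0 (T := T) (x := x)
    have h' : T * pi x / η ≤ η := by
      rw [div_le_iff₀ hη0]
      nlinarith
    linarith
  have hrowA : ∀ a ∈ A, 1 - 5 * η ≤ ∑ b ∈ A, (killed P x ^ T) a b := by
    intro a ha
    obtain ⟨ha, hEa⟩ := mem_filter.1 ha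
    have hPA := sum_sub_le_sum_of_sum_abs_sub_le (hmix a) A
    have hPx := le_add_of_sum_abs_sub_le (hmix a) x
    have := sum_pow_apply_sub_visits_le_sum_killed_pow_apply hP T (ne_of_mem_erase ha) A
    nlinarith
  have hmuA : 0 < ∑ a ∈ A, mu a := by
    refine sum_pos (fun a ha => hmupos a (ne_of_mem_erase (mem_filter.1 ha).1)) ?_
    refine nonempty_of_sum_ne_zero (f := pi) (ne_of_gt ?_)
    nlinarith
  exact le_of_vecMul_eq_smul (pow_apply_nonneg (killed_apply_nonneg hP0) T) hmu0
    (vecMul_pow_eq_smul hmuK T) hmuA hrowA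

theorem one_sub_sub_visits_le_of_mixing (hP : P ∈ rowStochastic ℝ (Fin n)) (hpi0 : 0 ≤ pi)
    (hpi1 : ∑ a, pi a = 1) (hpiP : pi ᵥ* P = pi) (hmix : ∀ a, ∑ b, |(P ^ T) a b - pi b| ≤ η)
    (hT : 1 ≤ T) (hTpi : T * pi x ≤ η ^ 2) (hmu0 : 0 ≤ mu) (hmu1 : ∑ a, mu a = 1)
    (hmuK : mu ᵥ* killed P x = lam • mu) (hmupos : ∀ a, a ≠ x → 0 < mu a) (hlam0 : 0 ≤ lam)
    (hlam1 : lam ≤ 1) (hgamma0 : 0 ≤ gamma) (hgammaK : killed P x *ᵥ gamma = lam • gamma)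
    (hmugamma : mu ⬝ᵥ gamma = 1) (hη0 : 0 < η) (hη : η ≤ 1 / 20) {y : Fin n} (hy : y ≠ x) :
    1 - 50 * η - ∑ u ∈ range T, (P ^ u) y x ≤ gamma y := by
  have hP0 : ∀ i j, 0 ≤ P i j := fun i j => nonneg_of_mem_rowStochastic hP
  have hL := one_sub_five_mul_le_pow_of_mixing hP hpi0 hpi1 hpiP hmix hT hTpi hmu0 hmuK hmupos
    hη0 (by linarith)
  have hL1 : lam ^ T ≤ 1 := pow_le_one₀ hlam0 hlam1
  obtain ⟨z, -, hz⟩ := exists_max_image univ gamma ⟨x, mem_univ x⟩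
  set M := gamma z
  set G := pi ⬝ᵥ gamma
  have hgM : ∀ b, gamma b ≤ M := fun b => hz b (mem_univ b)
  have hM : 0 ≤ M := hgamma0 z
  have hKg : ∀ a, (killed P x ^ T *ᵥ gamma) a = lam ^ T * gamma a := fun a => by
    rw [pow_mulVec_eq_smul hgammaK T, Pi.smul_apply, smul_eq_mul]
  have hPg : ∀ a, |(P ^ T *ᵥ gamma) a - G| ≤ η * M := fun a =>
    (abs_dotProduct_sub_dotProduct_le hgamma0 hgM).trans
      (mul_le_mul_of_nonneg_right (hmix a) hM)
  have hKP : ∀ a, (killed P x ^ T *ᵥ gamma) a ≤ (P ^ T *ᵥ gamma) a := fun a =>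
    sum_le_sum (s := univ) fun b _ =>
      mul_le_mul_of_nonneg_right (killed_pow_apply_le (x := x) hP0 T a b) (hgamma0 b)
  have hmuKg : mu ⬝ᵥ (killed P x ^ T *ᵥ gamma) = lam ^ T := by
    rw [dotProduct_pow_mulVec_of_vecMul_eq_smul hmuK, hmugamma, mul_one]
  have hmuK1 : mu ⬝ᵥ (killed P x ^ T *ᵥ 1) = lam ^ T := by
    rw [dotProduct_pow_mulVec_of_vecMul_eq_smul hmuK, dotProduct_one, hmu1, mul_one]
  have hLM : lam ^ T * M ≤ G + η * M := by
    linarith [hKg z, hKP z, (abs_le.1 (hPg z)).2]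
  have hGup : G - η * M - M * (1 - lam ^ T) ≤ lam ^ T := by
    have := add_mul_dotProduct_le_of_forall_le hmu0 hmu1 (v := killed P x ^ T *ᵥ 1)
      (f := killed P x ^ T *ᵥ gamma) (c := G - η * M - M) (d := M)
      fun a => by linarith [pow_mulVec_apply_sub_killed_pow_mulVec_apply_le (x := x) hP T a hgM,
        (abs_le.1 (hPg a)).1]
    rw [hmuK1, hmuKg] at this
    linarith
  have hGlow : lam ^ T ≤ G + η * M := hmuKg ▸ dotProduct_le_of_forall_le hmu0 hmu1 fun a => by
    linarith [hKP a, (abs_le.1 (hPg a)).2]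
  have hgy : G - η * M - M * (∑ u ∈ range T, (P ^ u) y x + 2 * η) ≤ gamma y := by
    have hpix : pi x ≤ η ^ 2 :=
      (le_mul_of_one_le_left (hpi0 x) (Nat.one_le_cast.2 hT)).trans hTpi
    have hPx : M * (P ^ T) y x ≤ M * (2 * η) :=
      mul_le_mul_of_nonneg_left (by nlinarith [le_add_of_sum_abs_sub_le (hmix y) x]) hM
    have hLg : lam ^ T * gamma y ≤ gamma y := mul_le_of_le_one_left (hgamma0 y) hL1
    nlinarith [sub_mul_visits_le_killed_pow_mulVec_apply hP T hy hM hgM, hKg y,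
      (abs_le.1 (hPg y)).1]
  exact one_sub_sub_le_of_bounds hη0.le hη hL hL1 hM hLM hGup hGlow
    (sum_nonneg fun u _ => pow_apply_nonneg hP0 u y x) (hgamma0 y) hgy

end KilledChain

theorem gamma_entrywise_lower_bound_general
    (P : (n : ℕ) → Matrix (Fin n) (Fin n) ℝ)
    (pi : (n : ℕ) → Fin n → ℝ)
    (x : (n : ℕ) → Fin n)
    (T : ℕ → ℕ) (c : ℝ)
    (hc : 2 < c)
    (hT : Filter.Tendsto T Filter.atTop Filter.atTop)
    (hnn : ∀ n : ℕ, 2 ≤ n → ∀ y z : Fin n, 0 ≤ P n y z)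
    (hrow : ∀ n : ℕ, 2 ≤ n → ∀ y : Fin n, ∑ z, P n y z = 1)
    (hpinn : ∀ n : ℕ, 2 ≤ n → ∀ y : Fin n, 0 ≤ pi n y)
    (hpisum : ∀ n : ℕ, 2 ≤ n → ∑ y, pi n y = 1)
    (hpistat : ∀ n : ℕ, 2 ≤ n → Matrix.vecMul (pi n) (P n) = pi n)
    (hkirr : ∀ n : ℕ, 2 ≤ n → ∀ y z : Fin n, y ≠ x n → z ≠ x n →
      ∃ t : ℕ, 0 < ((killed (P n) (x n)) ^ t) y z)
    (lam : ℕ → ℝ) (mu : (n : ℕ) → Fin n → ℝ)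
    (hlam : ∀ n : ℕ, 2 ≤ n → lam n ∈ Set.Ioo (0 : ℝ) 1)
    (hmunn : ∀ n : ℕ, 2 ≤ n → ∀ y : Fin n, 0 ≤ mu n y)
    (hmux : ∀ n : ℕ, 2 ≤ n → mu n (x n) = 0)
    (hmusum : ∀ n : ℕ, 2 ≤ n → ∑ y, mu n y = 1)
    (hmuqs : ∀ n : ℕ, 2 ≤ n →
      Matrix.vecMul (mu n) (killed (P n) (x n)) = lam n • mu n)
    (gamma : (n : ℕ) → Fin n → ℝ)
    (hgx : ∀ n : ℕ, 2 ≤ n → gamma n (x n) = 0)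
    (hgpos : ∀ n : ℕ, 2 ≤ n → ∀ y : Fin n, y ≠ x n → 0 < gamma n y)
    (hgeig : ∀ n : ℕ, 2 ≤ n →
      Matrix.mulVec (killed (P n) (x n)) (gamma n) = lam n • gamma n)
    (hgnorm : ∀ n : ℕ, 2 ≤ n →
      ∑ y ∈ Finset.univ.erase (x n), mu n y * gamma n y = 1)
    (HP1 : ∀ ε : ℝ, 0 < ε → ∃ N : ℕ, ∀ n : ℕ, N ≤ n → ∀ y z : Fin n,
      (n : ℝ) ^ c * |(P n ^ T n) y z - pi n z| < ε)
    (HP2 : ∀ ε : ℝ, 0 < ε → ∃ N : ℕ, ∀ n : ℕ, N ≤ n → ∀ y : Fin n,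
      (T n : ℝ) * pi n y < ε)
    :
    ∀ ε : ℝ, 0 < ε → ∃ N : ℕ, ∀ n : ℕ, N ≤ n → ∀ y : Fin n, y ≠ x n →
      1 - ε - ∑ s ∈ Finset.range (T n), (P n ^ s) y (x n) ≤ gamma n y := by
  intro ε hε
  set η := min (1 / 20) (ε / 50)
  have hη0 : 0 < η := lt_min (by norm_num) (by positivity)
  have hηε : 50 * η ≤ ε := by linarith [min_le_right (1 / 20 : ℝ) (ε / 50)]
  obtain ⟨N₁, hN₁⟩ := HP1 η hη0
  obtain ⟨N₂, hN₂⟩ := HP2 (η ^ 2) (by positivity)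
  obtain ⟨N₃, hN₃⟩ := eventually_atTop.1 (hT.eventually_ge_atTop 1)
  refine ⟨max (max N₁ N₂) (max N₃ 2), fun n hn y hy => ?_⟩
  obtain ⟨⟨h₁, h₂⟩, h₃, h2⟩ := by simpa only [max_le_iff] using hn
  have hP : P n ∈ rowStochastic ℝ (Fin n) := mem_rowStochastic_iff_sum.2 ⟨hnn n h2, hrow n h2⟩
  have hmix a := sum_abs_le_of_rpow_mul_abs_lt (by linarith) (by omega) (hN₁ n h₁ a)
  have hmupos a := pos_of_vecMul_killed_eq_smul (hnn n h2) (hkirr n h2) (hmunn n h2)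
    (hmusum n h2) (hmux n h2) (hlam n h2).1.le (hmuqs n h2) (b := a)
  have hgamma0 : 0 ≤ gamma n := fun a => by
    rcases eq_or_ne a (x n) with rfl | ha
    · exact (hgx n h2).ge
    · exact (hgpos n h2 a ha).le
  have hmugamma : mu n ⬝ᵥ gamma n = 1 := by
    rw [← hgnorm n h2, sum_erase_eq_sub (mem_univ _), hgx n h2, mul_zero, sub_zero, dotProduct]
  have hgy := one_sub_sub_visits_le_of_mixing hP (hpinn n h2) (hpisum n h2) (hpistat n h2) hmix
    (hN₃ n h₃) (hN₂ n h₂ (x n)).le (hmunn n h2) (hmusum n h2) (hmuqs n h2) hmupos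
    (hlam n h2).1.le (hlam n h2).2.le hgamma0 (hgeig n h2) hmugamma hη0 (min_le_left _ _) hy
  linarith

theorem gamma_entrywise_lower_bound
    (P : (n : ℕ) → Matrix (Fin n) (Fin n) ℝ)
    (pi : (n : ℕ) → Fin n → ℝ)
    (x : (n : ℕ) → Fin n)
    (T : ℕ → ℕ) (c : ℝ)
    (hc : 2 < c)
    (hT : Filter.Tendsto T Filter.atTop Filter.atTop)
    (hnn : ∀ n : ℕ, 2 ≤ n → ∀ y z : Fin n, 0 ≤ P n y z)
    (hrow : ∀ n : ℕ, 2 ≤ n → ∀ y : Fin n, ∑ z, P n y z = 1)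
    (hirr : ∀ n : ℕ, 2 ≤ n → ∀ y z : Fin n, ∃ t : ℕ, 0 < (P n ^ t) y z)
    (hpinn : ∀ n : ℕ, 2 ≤ n → ∀ y : Fin n, 0 ≤ pi n y)
    (hpisum : ∀ n : ℕ, 2 ≤ n → ∑ y, pi n y = 1)
    (hpistat : ∀ n : ℕ, 2 ≤ n → Matrix.vecMul (pi n) (P n) = pi n)
    (hpiuniq : ∀ n : ℕ, 2 ≤ n → ∀ rho : Fin n → ℝ, (∀ y, 0 ≤ rho y) →
      (∑ y, rho y = 1) → Matrix.vecMul rho (P n) = rho → rho = pi n)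
    (hkirr : ∀ n : ℕ, 2 ≤ n → ∀ y z : Fin n, y ≠ x n → z ≠ x n →
      ∃ t : ℕ, 0 < ((killed (P n) (x n)) ^ t) y z)
    (lam : ℕ → ℝ) (mu : (n : ℕ) → Fin n → ℝ)
    (hlam : ∀ n : ℕ, 2 ≤ n → lam n ∈ Set.Ioo (0 : ℝ) 1)
    (hmunn : ∀ n : ℕ, 2 ≤ n → ∀ y : Fin n, 0 ≤ mu n y)
    (hmux : ∀ n : ℕ, 2 ≤ n → mu n (x n) = 0)
    (hmusum : ∀ n : ℕ, 2 ≤ n → ∑ y, mu n y = 1)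
    (hmuqs : ∀ n : ℕ, 2 ≤ n →
      Matrix.vecMul (mu n) (killed (P n) (x n)) = lam n • mu n)
    (gamma : (n : ℕ) → Fin n → ℝ)
    (hgx : ∀ n : ℕ, 2 ≤ n → gamma n (x n) = 0)
    (hgpos : ∀ n : ℕ, 2 ≤ n → ∀ y : Fin n, y ≠ x n → 0 < gamma n y)
    (hgeig : ∀ n : ℕ, 2 ≤ n →
      Matrix.mulVec (killed (P n) (x n)) (gamma n) = lam n • gamma n)
    (hgnorm : ∀ n : ℕ, 2 ≤ n →
      ∑ y ∈ Finset.univ.erase (x n), mu n y * gamma n y = 1)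
    (HP1 : ∀ ε : ℝ, 0 < ε → ∃ N : ℕ, ∀ n : ℕ, N ≤ n → ∀ y z : Fin n,
      (n : ℝ) ^ c * |(P n ^ T n) y z - pi n z| < ε)
    (HP2 : ∀ ε : ℝ, 0 < ε → ∃ N : ℕ, ∀ n : ℕ, N ≤ n → ∀ y : Fin n,
      (T n : ℝ) * pi n y < ε)
    (HP3 : ∀ M : ℝ, ∃ N : ℕ, ∀ n : ℕ, N ≤ n → ∀ y : Fin n,
      M < (n : ℝ) ^ 2 * pi n y)
    :
    ∀ ε : ℝ, 0 < ε → ∃ N : ℕ, ∀ n : ℕ, N ≤ n → ∀ y : Fin n, y ≠ x n →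
      1 - ε - ∑ s ∈ Finset.range (T n), (P n ^ s) y (x n) ≤ gamma n y :=
  gamma_entrywise_lower_bound_general P pi x T c hc hT hnn hrow hpinn hpisum hpistat hkirr lam mu
    hlam hmunn hmux hmusum hmuqs gamma hgx hgpos hgeig hgnorm HP1 HP2
end

section
/- Upper bound by a time-shifted stationary tail: under (HP1)–(HP3), for every ε > 0 there exists N such that for all n ≥ N, all t > T_n and all y ∈ X_n, ℙ_{δ_y}(τ_{x_n} > t) ≤ (1 + ε) · ℙ_{π_n}(τ_{x_n} > t − T_n). -/
/-!
Started from `y`, the killed chain is dominated entrywise by the original one, so by the Markov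
property at time `T_n` the no-hit probability after `t` steps is at most the no-hit probability
after `t - T_n` steps started from the law `P_n^{T_n}(y, ·)`. By (HP1) this law is within
`o(n^{-c})` of `π_n`, and by (HP3) `π_n ≥ n^{-2}` entrywise for large `n`; as `c > 2`, it is
eventually at most `(1 + ε) π_n`.
-/

open Finset Filter

open Matrix

namespace Matrix

variable {ι R : Type*} [Fintype ι] [DecidableEq ι] [Semiring R] [PartialOrder R]
  [IsOrderedRing R]

theorem pow_apply_le_pow_apply_s10 {A B : Matrix ι ι R} (hA : ∀ i j, 0 ≤ A i j)
    (hAB : ∀ i j, A i j ≤ B i j) (k : ℕ) : ∀ i j, (A ^ k) i j ≤ (B ^ k) i j := by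
  induction k with
  | zero => exact fun _ _ => le_rfl
  | succ k ih =>
    intro i j
    rw [pow_succ, pow_succ, mul_apply, mul_apply]
    exact Finset.sum_le_sum fun l _ => mul_le_mul (ih i l) (hAB l j) (hA l j)
      (pow_apply_nonneg (fun a b => (hA a b).trans (hAB a b)) k i l)

end Matrix

section Killed

variable {n : ℕ} {P : Matrix (Fin n) (Fin n) ℝ} {x : Fin n}

theorem killed_nonneg (hP : ∀ y z, 0 ≤ P y z) (y z : Fin n) : 0 ≤ killed P x y z := by
  rw [killed, of_apply]
  split_ifs <;> simp [hP]

theorem killed_le (hP : ∀ y z, 0 ≤ P y z) (y z : Fin n) : killed P x y z ≤ P y z := by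
  rw [killed, of_apply]
  split_ifs <;> simp [hP]

theorem killed_pow_apply_of_ne {z : Fin n} (hz : z ≠ x) (t : ℕ) : (killed P x ^ t) x z = 0 := by
  cases t with
  | zero => simp [one_apply, hz.symm]
  | succ t => simp [pow_succ', mul_apply, killed]

theorem killed_pow_add_apply (s u : ℕ) (y : Fin n) {z : Fin n} (hz : z ≠ x) :
    (killed P x ^ (s + u)) y z =
      ∑ w ∈ univ.erase x, (killed P x ^ s) y w * (killed P x ^ u) w z := by
  rw [pow_add, mul_apply, Finset.sum_erase _ (by simp [killed_pow_apply_of_ne hz])]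

theorem noHit_add (α : Fin n → ℝ) (s u : ℕ) :
    noHit P x α (s + u) =
      noHit P x (fun w => ∑ y ∈ univ.erase x, α y * (killed P x ^ s) y w) u := by
  unfold noHit
  calc _ = ∑ y ∈ univ.erase x, ∑ z ∈ univ.erase x, ∑ w ∈ univ.erase x,
        α y * (killed P x ^ s) y w * (killed P x ^ u) w z := by
        refine Finset.sum_congr rfl fun y _ => Finset.sum_congr rfl fun z hz => ?_
        rw [killed_pow_add_apply s u y (Finset.ne_of_mem_erase hz), Finset.mul_sum]
        simp only [mul_assoc]
    _ = _ := by
        simp only [Finset.sum_mul]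
        rw [Finset.sum_comm_cycle]
        exact Finset.sum_congr rfl fun _ _ => Finset.sum_comm

theorem noHit_mono (hP : ∀ y z, 0 ≤ P y z) {α β : Fin n → ℝ} (h : ∀ y, α y ≤ β y) (t : ℕ) :
    noHit P x α t ≤ noHit P x β t :=
  Finset.sum_le_sum fun y _ => Finset.sum_le_sum fun z _ =>
    mul_le_mul_of_nonneg_right (h y) (pow_apply_nonneg (killed_nonneg hP) t y z)

theorem noHit_smul (a : ℝ) (α : Fin n → ℝ) (t : ℕ) :
    noHit P x (a • α) t = a * noHit P x α t := by
  simp only [noHit, Finset.mul_sum, Pi.smul_apply, smul_eq_mul, mul_assoc]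

theorem noHit_add_le_noHit_vecMul_pow (hP : ∀ y z, 0 ≤ P y z) {α : Fin n → ℝ}
    (hα : ∀ y, 0 ≤ α y) (s u : ℕ) : noHit P x α (s + u) ≤ noHit P x (α ᵥ* P ^ s) u := by
  rw [noHit_add]
  refine noHit_mono hP (fun w => ?_) u
  calc ∑ y ∈ univ.erase x, α y * (killed P x ^ s) y w
      ≤ ∑ y ∈ univ.erase x, α y * (P ^ s) y w :=
        Finset.sum_le_sum fun y _ => mul_le_mul_of_nonneg_left
          (pow_apply_le_pow_apply_s10 (killed_nonneg hP) (killed_le hP) s y w) (hα y)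
    _ ≤ (α ᵥ* P ^ s) w := by
        rw [vecMul_apply_eq_sum]
        exact Finset.sum_le_sum_of_subset_of_nonneg (Finset.subset_univ _)
          fun y _ _ => mul_nonneg (hα y) (pow_apply_nonneg hP s y w)

end Killed

theorem le_one_add_mul_of_rpow_mul_abs_sub_lt {m c ε p q : ℝ} (hm : 1 ≤ m) (hc : 2 ≤ c)
    (hpq : m ^ c * |p - q| < ε) (hq : 1 < m ^ 2 * q) : p ≤ (1 + ε) * q := by
  have hsq : m ^ 2 ≤ m ^ c := by
    simpa using Real.rpow_le_rpow_of_exponent_le hm hc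
  have hε : 0 < ε := lt_of_le_of_lt (by positivity) hpq
  nlinarith [le_abs_self (p - q), abs_nonneg (p - q)]

theorem upper_bound_time_shifted_stationary_tail_general
    (P : (n : ℕ) → Matrix (Fin n) (Fin n) ℝ)
    (pi : (n : ℕ) → Fin n → ℝ)
    (x : (n : ℕ) → Fin n)
    (T : ℕ → ℕ) (c : ℝ)
    (hc : 2 < c)
    (hnn : ∀ n : ℕ, 2 ≤ n → ∀ y z : Fin n, 0 ≤ P n y z)
    (HP1 : ∀ ε : ℝ, 0 < ε → ∃ N : ℕ, ∀ n : ℕ, N ≤ n → ∀ y z : Fin n,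
      (n : ℝ) ^ c * |(P n ^ T n) y z - pi n z| < ε)
    (HP3 : ∀ M : ℝ, ∃ N : ℕ, ∀ n : ℕ, N ≤ n → ∀ y : Fin n,
      M < (n : ℝ) ^ 2 * pi n y)
    :
    ∀ ε : ℝ, 0 < ε → ∃ N : ℕ, ∀ n : ℕ, N ≤ n → ∀ t : ℕ, T n < t → ∀ y : Fin n,
      noHit (P n) (x n) (fun z => if z = y then (1 : ℝ) else 0) t
        ≤ (1 + ε) * noHit (P n) (x n) (pi n) (t - T n) := by
  intro ε hε
  obtain ⟨N₁, hN₁⟩ := HP1 ε hε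
  obtain ⟨N₃, hN₃⟩ := HP3 1
  refine ⟨max (max N₁ N₃) 2, fun n hn t ht y => ?_⟩
  simp only [max_le_iff] at hn
  obtain ⟨⟨hn₁, hn₃⟩, hn₂⟩ := hn
  have hrow : ∀ w, (P n ^ T n) y w ≤ (1 + ε) * pi n w := fun w =>
    le_one_add_mul_of_rpow_mul_abs_sub_lt (by exact_mod_cast one_le_two.trans hn₂) hc.le
      (hN₁ n hn₁ y w) (hN₃ n hn₃ w)
  obtain ⟨u, rfl⟩ := Nat.exists_eq_add_of_le ht.le
  rw [Nat.add_sub_cancel_left, ← noHit_smul]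
  refine (noHit_add_le_noHit_vecMul_pow (hnn n hn₂) (fun z => ?_) (T n) u).trans ?_
  · split_ifs <;> norm_num
  refine noHit_mono (hnn n hn₂) (fun w => ?_) u
  simpa [vecMul_apply_eq_sum] using hrow w

theorem upper_bound_time_shifted_stationary_tail
    (P : (n : ℕ) → Matrix (Fin n) (Fin n) ℝ)
    (pi : (n : ℕ) → Fin n → ℝ)
    (x : (n : ℕ) → Fin n)
    (T : ℕ → ℕ) (c : ℝ)
    (hc : 2 < c)
    (hT : Filter.Tendsto T Filter.atTop Filter.atTop)
    (hnn : ∀ n : ℕ, 2 ≤ n → ∀ y z : Fin n, 0 ≤ P n y z)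
    (hrow : ∀ n : ℕ, 2 ≤ n → ∀ y : Fin n, ∑ z, P n y z = 1)
    (hirr : ∀ n : ℕ, 2 ≤ n → ∀ y z : Fin n, ∃ t : ℕ, 0 < (P n ^ t) y z)
    (hpinn : ∀ n : ℕ, 2 ≤ n → ∀ y : Fin n, 0 ≤ pi n y)
    (hpisum : ∀ n : ℕ, 2 ≤ n → ∑ y, pi n y = 1)
    (hpistat : ∀ n : ℕ, 2 ≤ n → Matrix.vecMul (pi n) (P n) = pi n)
    (hpiuniq : ∀ n : ℕ, 2 ≤ n → ∀ rho : Fin n → ℝ, (∀ y, 0 ≤ rho y) →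
      (∑ y, rho y = 1) → Matrix.vecMul rho (P n) = rho → rho = pi n)
    (hkirr : ∀ n : ℕ, 2 ≤ n → ∀ y z : Fin n, y ≠ x n → z ≠ x n →
      ∃ t : ℕ, 0 < ((killed (P n) (x n)) ^ t) y z)
    (HP1 : ∀ ε : ℝ, 0 < ε → ∃ N : ℕ, ∀ n : ℕ, N ≤ n → ∀ y z : Fin n,
      (n : ℝ) ^ c * |(P n ^ T n) y z - pi n z| < ε)
    (HP2 : ∀ ε : ℝ, 0 < ε → ∃ N : ℕ, ∀ n : ℕ, N ≤ n → ∀ y : Fin n,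
      (T n : ℝ) * pi n y < ε)
    (HP3 : ∀ M : ℝ, ∃ N : ℕ, ∀ n : ℕ, N ≤ n → ∀ y : Fin n,
      M < (n : ℝ) ^ 2 * pi n y)
    :
    ∀ ε : ℝ, 0 < ε → ∃ N : ℕ, ∀ n : ℕ, N ≤ n → ∀ t : ℕ, T n < t → ∀ y : Fin n,
      noHit (P n) (x n) (fun z => if z = y then (1 : ℝ) else 0) t
        ≤ (1 + ε) * noHit (P n) (x n) (pi n) (t - T n) :=
  upper_bound_time_shifted_stationary_tail_general P pi x T c hc hnn HP1 HP3
end
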